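/- Degree bound on the Hermite form: if A ∈ S^{n×n} has full row rank with deg_D A_{ij} ≤ d for all i,j, then its Hermite form H satisfies deg_D H_{ij} ≤ n·d for all i, j. -/

import Mathlib

/-- Abstract presentation of a skew (Ore/differential) polynomial ring `S = K[D; δ]`:
`S` is a ring containing `K` via `ι`, with a distinguished element `D` satisfying the
commutation rule `D * a = a * D + δ a`, and every element of `S` is (uniquely) a finite
sum `∑ aₙ Dⁿ`, with coefficients `coeff` supported on `supp`. -/
structure DiffPolyRing (K : Type) [CommRing K] (S : Type) [Ring S] (δ : K → K) where
  ι : K →+* S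
  D : S
  comm_rule : ∀ a : K, D * ι a = ι a * D + ι (δ a)
  coeff : S → ℕ → K
  supp : S → Finset ℕ
  mem_supp : ∀ f n, n ∈ supp f ↔ coeff f n ≠ 0
  coeff_add : ∀ f g n, coeff (f + g) n = coeff f n + coeff g n
  coeff_ext : ∀ f g : S, (∀ n, coeff f n = coeff g n) → f = g
  coeff_monomial : ∀ (a : K) (i n : ℕ), coeff (ι a * D ^ i) n = if n = i then a else 0
  repr_sum : ∀ f : S, f = ∑ n ∈ supp f, ι (coeff f n) * D ^ n

namespace DiffPolyRing

variable {K S : Type} [CommRing K] [Ring S] {δ : K → K}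

/-- Degree in the variable `D`, with `degD 0 = ⊥` (i.e. `-∞`). -/
noncomputable def degD (R : DiffPolyRing K S δ) (f : S) : WithBot ℕ := (R.supp f).max

/-- Degree in `D` as a natural number (`0` for the zero polynomial). -/
noncomputable def natDegD (R : DiffPolyRing K S δ) (f : S) : ℕ := (R.degD f).unbotD 0

/-- `f` is monic: its leading coefficient (in `D`) is `1`. -/
noncomputable def Monic (R : DiffPolyRing K S δ) (f : S) : Prop :=
  R.coeff f (R.natDegD f) = 1

/-- `H` is in Hermite form: upper triangular, monic diagonal entries, and each
off-diagonal entry has `D`-degree strictly less than the diagonal entry below it. -/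
noncomputable def HermiteForm (R : DiffPolyRing K S δ) {n : ℕ}
    (H : Matrix (Fin n) (Fin n) S) : Prop :=
  (∀ i j, j < i → H i j = 0) ∧ (∀ i, R.Monic (H i i)) ∧
    (∀ i j, i < j → R.degD (H i j) < R.degD (H j j))

/-- The rows of `A` are left `S`-linearly independent. -/
def FullRowRank {n : ℕ} (A : Matrix (Fin n) (Fin n) S) : Prop :=
  ∀ c : Fin n → S, (∀ j, (∑ i, c i * A i j) = 0) → c = 0

end DiffPolyRing

/-!
Let `V = U⁻¹`, so that `A = V H`. If `c, w ∈ Sⁿ` satisfy `c A + w = 0` with `deg w_j < deg H_jj`,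
then `c V = 0`: at the first nonzero entry `p` of `c V`, the leading coefficient of `(c V)_p H_pp`
cannot be cancelled by `w_p`; hence `c = 0` and `w = 0`. With `M = ∑ deg H_jj`, the `F(t)`-linear
map `(c, w) ↦ c A + w` from pairs with `deg c_i ≤ M`, `deg w_j < deg H_jj` (dimension `n(M+1) + M`)
to vectors of degree `≤ M + d` (dimension `n(M+d+1)`) is therefore injective, so `M ≤ n d`. The
off-diagonal entries of `H` have smaller degree than the diagonal ones.
-/

namespace DiffPolyRing

open Matrix

section

variable {K S : Type} [CommRing K] [Ring S] {δ : K → K} (R : DiffPolyRing K S δ)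

def coeffAddMonoidHom (k : ℕ) : S →+ K where
  toFun f := R.coeff f k
  map_zero' := by simpa using R.coeff_monomial 0 0 k
  map_add' f g := R.coeff_add f g k

@[simp]
theorem coeff_zero (k : ℕ) : R.coeff 0 k = 0 :=
  map_zero (R.coeffAddMonoidHom k)

theorem coeff_sum {α : Type*} (s : Finset α) (f : α → S) (k : ℕ) :
    R.coeff (∑ a ∈ s, f a) k = ∑ a ∈ s, R.coeff (f a) k :=
  map_sum (R.coeffAddMonoidHom k) f s

theorem coeff_ι (a : K) (k : ℕ) : R.coeff (R.ι a) k = if k = 0 then a else 0 := by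
  simpa using R.coeff_monomial a 0 k

theorem ι_injective : Function.Injective R.ι := fun a b h => by
  simpa [coeff_ι] using congrArg (R.coeff · 0) h

theorem induction_on {P : S → Prop} (f : S) (zero : P 0)
    (add : ∀ f g, P f → P g → P (f + g)) (monomial : ∀ a i, P (R.ι a * R.D ^ i)) : P f := by
  rw [R.repr_sum f]
  exact Finset.sum_induction _ P add zero fun n _ => monomial _ n

theorem ι_δ (a : K) : R.ι (δ a) = R.D * R.ι a - R.ι a * R.D := by
  rw [R.comm_rule]; abel

theorem δ_add (R : DiffPolyRing K S δ) (a b : K) : δ (a + b) = δ a + δ b :=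
  R.ι_injective <| by simp only [map_add, ι_δ]; noncomm_ring

theorem δ_zero (R : DiffPolyRing K S δ) : δ 0 = 0 :=
  R.ι_injective <| by simp [ι_δ]

theorem coeff_ι_mul (a : K) (f : S) (k : ℕ) : R.coeff (R.ι a * f) k = a * R.coeff f k := by
  induction f using R.induction_on with
  | zero => simp
  | add f g hf hg => rw [mul_add, R.coeff_add, R.coeff_add, hf, hg, mul_add]
  | monomial b i =>
    rw [← mul_assoc, ← map_mul, R.coeff_monomial, R.coeff_monomial, mul_ite, mul_zero]

theorem coeff_D_mul_succ (f : S) (k : ℕ) :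
    R.coeff (R.D * f) (k + 1) = R.coeff f k + δ (R.coeff f (k + 1)) := by
  induction f using R.induction_on with
  | zero => simp [R.δ_zero]
  | add f g hf hg => simp only [mul_add, R.coeff_add, hf, hg, R.δ_add]; abel
  | monomial a i =>
    rw [← mul_assoc, R.comm_rule, add_mul, mul_assoc, ← pow_succ', R.coeff_add]
    simp only [R.coeff_monomial]
    split_ifs <;> simp_all [R.δ_zero]

theorem degD_le_iff_coeff_eq_zero {f : S} {n : ℕ} :
    R.degD f ≤ n ↔ ∀ k, n < k → R.coeff f k = 0 := by
  simp only [degD, Finset.max_le_iff, Nat.cast_withBot, WithBot.coe_le_coe, R.mem_supp]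
  exact forall_congr' fun k => by rw [not_imp_comm, not_le]

theorem degD_lt_iff_coeff_eq_zero {f : S} {n : ℕ} :
    R.degD f < n ↔ ∀ k, n ≤ k → R.coeff f k = 0 := by
  simp only [degD, Finset.max, Finset.sup_lt_iff (WithBot.bot_lt_coe n), Nat.cast_withBot,
    WithBot.coe_lt_coe, R.mem_supp]
  exact forall_congr' fun k => by rw [not_imp_comm, not_lt]

theorem coeff_eq_zero_of_degD_lt {f : S} {k : ℕ} (h : R.degD f < k) : R.coeff f k = 0 :=
  R.degD_lt_iff_coeff_eq_zero.1 h k le_rfl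

theorem degD_eq_bot_iff {f : S} : R.degD f = ⊥ ↔ f = 0 := by
  rw [degD, Finset.max_eq_bot]
  refine ⟨fun h => by rw [R.repr_sum f, h, Finset.sum_empty], ?_⟩
  rintro rfl
  exact Finset.eq_empty_of_forall_notMem fun k hk => (R.mem_supp 0 k).1 hk (R.coeff_zero k)

theorem degD_le_natDegD (f : S) : R.degD f ≤ R.natDegD f :=
  WithBot.le_coe_unbotD _ _

theorem degD_eq_natDegD {f : S} (hf : f ≠ 0) : R.degD f = R.natDegD f := by
  obtain ⟨m, hm⟩ := WithBot.ne_bot_iff_exists.1 (R.degD_eq_bot_iff.not.2 hf)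
  simp [natDegD, ← hm, Nat.cast_withBot]

theorem coeff_natDegD_ne_zero {f : S} (hf : f ≠ 0) : R.coeff f (R.natDegD f) ≠ 0 :=
  (R.mem_supp f _).1 (Finset.mem_of_max (R.degD_eq_natDegD hf))

variable {R} in
theorem Monic.ne_zero [Nontrivial K] {f : S} (hf : R.Monic f) : f ≠ 0 := by
  rintro rfl
  simp [Monic] at hf

theorem coeff_D_pow_mul_of_lt {g : S} {q : ℕ} (hg : R.degD g ≤ q) {i k : ℕ} (hk : i + q < k) :
    R.coeff (R.D ^ i * g) k = 0 := by
  induction i generalizing k with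
  | zero => simpa using R.degD_le_iff_coeff_eq_zero.1 hg k (by omega)
  | succ i ih =>
    obtain ⟨k, rfl⟩ : ∃ k', k = k' + 1 := ⟨k - 1, by omega⟩
    rw [pow_succ', mul_assoc, R.coeff_D_mul_succ, ih (by omega), ih (by omega), R.δ_zero,
      add_zero]

theorem coeff_D_pow_mul_add {g : S} {q : ℕ} (hg : R.degD g ≤ q) (i : ℕ) :
    R.coeff (R.D ^ i * g) (i + q) = R.coeff g q := by
  induction i with
  | zero => simp
  | succ i ih =>
    rw [pow_succ', mul_assoc, add_right_comm, R.coeff_D_mul_succ, ih,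
      R.coeff_D_pow_mul_of_lt hg (by omega), R.δ_zero, add_zero]

theorem coeff_mul (f g : S) (k : ℕ) :
    R.coeff (f * g) k = ∑ i ∈ R.supp f, R.coeff f i * R.coeff (R.D ^ i * g) k := by
  conv_lhs => rw [R.repr_sum f, Finset.sum_mul]
  simp only [R.coeff_sum, mul_assoc, R.coeff_ι_mul]

theorem le_of_mem_supp {f : S} {p i : ℕ} (hf : R.degD f ≤ p) (hi : i ∈ R.supp f) : i ≤ p :=
  not_lt.1 fun hpi => (R.mem_supp f i).1 hi (R.degD_le_iff_coeff_eq_zero.1 hf i hpi)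

theorem coeff_mul_of_lt {f g : S} {p q k : ℕ} (hf : R.degD f ≤ p) (hg : R.degD g ≤ q)
    (hk : p + q < k) : R.coeff (f * g) k = 0 := by
  refine (R.coeff_mul f g k).trans (Finset.sum_eq_zero fun i hi => ?_)
  have := R.le_of_mem_supp hf hi
  rw [R.coeff_D_pow_mul_of_lt hg (by omega), mul_zero]

theorem coeff_mul_add {f g : S} {p q : ℕ} (hf : R.degD f ≤ p) (hg : R.degD g ≤ q) :
    R.coeff (f * g) (p + q) = R.coeff f p * R.coeff g q := by
  rw [R.coeff_mul, Finset.sum_eq_single p, R.coeff_D_pow_mul_add hg]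
  · intro i hi hip
    have := R.le_of_mem_supp hf hi
    rw [R.coeff_D_pow_mul_of_lt hg (by omega), mul_zero]
  · intro hp
    rw [not_not.1 (mt (R.mem_supp f p).2 hp), zero_mul]

/-- Leading coefficients multiply, so a nonzero multiple of `g` has degree at least `deg g`. -/
theorem eq_zero_of_mul_add_eq_zero [NoZeroDivisors K] {f g w : S} (hg : g ≠ 0)
    (hw : R.degD w < R.degD g) (h : f * g + w = 0) : f = 0 := by
  by_contra hf
  have hlead : R.coeff (f * g) (R.natDegD f + R.natDegD g) ≠ 0 := by
    rw [R.coeff_mul_add (R.degD_le_natDegD f) (R.degD_le_natDegD g)]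
    exact mul_ne_zero (R.coeff_natDegD_ne_zero hf) (R.coeff_natDegD_ne_zero hg)
  have hw0 : R.coeff w (R.natDegD f + R.natDegD g) = 0 := by
    refine R.coeff_eq_zero_of_degD_lt (hw.trans_le ?_)
    rw [R.degD_eq_natDegD hg]
    exact_mod_cast Nat.le_add_left _ _
  have := congrArg (R.coeff · (R.natDegD f + R.natDegD g)) h
  simp only [R.coeff_add, hw0, add_zero, R.coeff_zero] at this
  exact hlead this

theorem eq_zero_of_vecMul_add_eq_zero_of_blockTriangular [NoZeroDivisors K] {n : ℕ}
    {H : Matrix (Fin n) (Fin n) S}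
    (htri : H.BlockTriangular id) (hdiag : ∀ i, H i i ≠ 0) {c w : Fin n → S}
    (hw : ∀ j, R.degD (w j) < R.degD (H j j)) (h : c ᵥ* H + w = 0) : c = 0 := by
  suffices ∀ p, c p = 0 from funext this
  intro p
  induction p using WellFoundedLT.induction with
  | _ p ih =>
    have hcol : (c ᵥ* H) p = c p * H p p := by
      simp only [vecMul, dotProduct]
      refine Finset.sum_eq_single_of_mem p (Finset.mem_univ p) fun i _ hip => ?_
      rcases hip.lt_or_gt with hlt | hgt
      · rw [ih i hlt, zero_mul]
      · rw [htri hgt, mul_zero]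
    exact R.eq_zero_of_mul_add_eq_zero (hdiag p) (hw p) (hcol ▸ congrFun h p)

theorem eq_zero_of_vecMul_add_eq_zero_of_mul_eq [NoZeroDivisors K] {n : ℕ}
    {A U H : Matrix (Fin n) (Fin n) S} (hU : IsUnit U) (hUA : U * A = H)
    (htri : H.BlockTriangular id) (hdiag : ∀ i, H i i ≠ 0) {c w : Fin n → S}
    (hw : ∀ j, R.degD (w j) < R.degD (H j j)) (h : c ᵥ* A + w = 0) : c = 0 := by
  obtain ⟨u, rfl⟩ := hU
  have hcV : c ᵥ* ↑u⁻¹ = 0 :=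
    R.eq_zero_of_vecMul_add_eq_zero_of_blockTriangular htri hdiag hw <| by
      rwa [← hUA, vecMul_vecMul, ← mul_assoc, u.inv_mul, one_mul]
  rw [← vecMul_one c, ← u.inv_mul, ← vecMul_vecMul, hcV, zero_vecMul]

def ofCoeffs {N : ℕ} (b : Fin N → K) : S :=
  ∑ m : Fin N, R.ι (b m) * R.D ^ (m : ℕ)

theorem coeff_ofCoeffs {N : ℕ} (b : Fin N → K) (k : ℕ) :
    R.coeff (R.ofCoeffs b) k = if h : k < N then b ⟨k, h⟩ else 0 := by
  simp only [ofCoeffs, R.coeff_sum, R.coeff_monomial]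
  split_ifs with hk
  · refine (Finset.sum_eq_single_of_mem ⟨k, hk⟩ (Finset.mem_univ _) fun m _ hm => if_neg ?_).trans
      (if_pos rfl)
    exact fun h => hm (Fin.ext h.symm)
  · exact Finset.sum_eq_zero fun m _ => if_neg fun h : k = m => hk (h ▸ m.isLt)

theorem degD_ofCoeffs_lt {N : ℕ} (b : Fin N → K) : R.degD (R.ofCoeffs b) < N :=
  R.degD_lt_iff_coeff_eq_zero.2 fun k hk => by rw [coeff_ofCoeffs, dif_neg (by omega)]

theorem ofCoeffs_eq_zero_iff {N : ℕ} {b : Fin N → K} : R.ofCoeffs b = 0 ↔ b = 0 := by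
  refine ⟨fun h => funext fun k => ?_, fun h => by simp [h, ofCoeffs]⟩
  simpa [coeff_ofCoeffs] using congrArg (R.coeff · k) h

theorem ofCoeffs_add {N : ℕ} (b b' : Fin N → K) :
    R.ofCoeffs (b + b') = R.ofCoeffs b + R.ofCoeffs b' := by
  simp [ofCoeffs, add_mul, Finset.sum_add_distrib]

theorem ofCoeffs_smul {N : ℕ} (a : K) (b : Fin N → K) :
    R.ofCoeffs (a • b) = R.ι a * R.ofCoeffs b := by
  simp [ofCoeffs, Finset.mul_sum, mul_assoc]

def truncatedCombination {n : ℕ} (A : Matrix (Fin n) (Fin n) S) (P N : ℕ) (r : Fin n → ℕ) :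
    ((Fin n → Fin P → K) × ((j : Fin n) → Fin (r j) → K)) →ₗ[K] (Fin n → Fin N → K) where
  toFun be j k :=
    R.coeff (((fun i => R.ofCoeffs (be.1 i)) ᵥ* A + fun j => R.ofCoeffs (be.2 j)) j) k
  map_add' x y := by
    ext j k
    simp only [vecMul, dotProduct, Pi.add_apply, Prod.fst_add, Prod.snd_add, R.ofCoeffs_add,
      add_mul, Finset.sum_add_distrib, R.coeff_add]
    abel
  map_smul' a x := by
    ext j k
    simp only [vecMul, dotProduct, Pi.add_apply, Prod.smul_fst, Prod.smul_snd, R.ofCoeffs_smul,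
      mul_assoc, R.coeff_add, R.coeff_sum, R.coeff_ι_mul, Finset.mul_sum, mul_add,
      RingHom.id_apply, Pi.smul_apply, smul_eq_mul]

theorem truncatedCombination_injective [NoZeroDivisors K] {n d P N : ℕ}
    {A U H : Matrix (Fin n) (Fin n) S} (hdeg : ∀ i j, R.degD (A i j) ≤ d) (hU : IsUnit U)
    (hUA : U * A = H) (htri : H.BlockTriangular id) (hdiag : ∀ i, H i i ≠ 0) (hPN : P + d < N)
    (hHN : ∀ j, R.natDegD (H j j) ≤ N) :
    Function.Injective (R.truncatedCombination A (P + 1) N fun j => R.natDegD (H j j)) := by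
  refine (injective_iff_map_eq_zero _).2 fun ⟨b, e⟩ h => ?_
  set c : Fin n → S := fun i => R.ofCoeffs (b i)
  set w : Fin n → S := fun j => R.ofCoeffs (e j)
  have hX : c ᵥ* A + w = 0 := by
    funext j
    refine R.coeff_ext _ 0 fun k => ?_
    rw [R.coeff_zero]
    by_cases hk : k < N
    · exact congrFun (congrFun h j) ⟨k, hk⟩
    have hc : ∀ i, R.degD (c i) ≤ P := fun i => R.degD_le_iff_coeff_eq_zero.2
      (R.degD_lt_iff_coeff_eq_zero.1 (R.degD_ofCoeffs_lt (b i)))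
    simp only [Pi.add_apply, vecMul, dotProduct, R.coeff_add, R.coeff_sum]
    rw [Finset.sum_eq_zero fun i _ => R.coeff_mul_of_lt (hc i) (hdeg i j) (by omega),
      R.degD_lt_iff_coeff_eq_zero.1 (R.degD_ofCoeffs_lt (e j)) k ((hHN j).trans (not_lt.1 hk)), add_zero]
  have hc : c = 0 := R.eq_zero_of_vecMul_add_eq_zero_of_mul_eq hU hUA htri hdiag
    (fun j => by rw [R.degD_eq_natDegD (hdiag j)]; exact R.degD_ofCoeffs_lt _) hX
  rw [hc, zero_vecMul, zero_add] at hX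
  exact Prod.ext (funext fun i => R.ofCoeffs_eq_zero_iff.1 (congrFun hc i))
    (funext fun j => R.ofCoeffs_eq_zero_iff.1 (congrFun hX j))

end

theorem sum_natDegD_diag_le {K S : Type} [Field K] [Ring S] {δ : K → K}
    (R : DiffPolyRing K S δ) {n d : ℕ} {A U H : Matrix (Fin n) (Fin n) S}
    (hdeg : ∀ i j, R.degD (A i j) ≤ d) (hU : IsUnit U) (hUA : U * A = H)
    (htri : H.BlockTriangular id) (hdiag : ∀ i, H i i ≠ 0) :
    ∑ j, R.natDegD (H j j) ≤ n * d := by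
  set M := ∑ j, R.natDegD (H j j)
  have hle : ∀ j, R.natDegD (H j j) ≤ M + d + 1 := fun j =>
    (Finset.single_le_sum (f := fun j => R.natDegD (H j j)) (by simp) (Finset.mem_univ j)).trans
      (by omega)
  have := LinearMap.finrank_le_finrank_of_injective
    (R.truncatedCombination_injective hdeg hU hUA htri hdiag (Nat.lt_succ_self (M + d)) hle)
  simp only [Module.finrank_prod, Module.finrank_pi_fintype, Finset.sum_const, Finset.card_univ,
    Fintype.card_fin, smul_eq_mul, Module.finrank_self, mul_one] at this
  -- `this : n * (M + 1) + M ≤ n * (M + d + 1)`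
  nlinarith [show ∑ j, R.natDegD (H j j) = M from rfl]

end DiffPolyRing

theorem degD_hermite_form_le_general
    {F : Type} [Field F] {S : Type} [Ring S]
    (δ : RatFunc F → RatFunc F)
    (R : DiffPolyRing (RatFunc F) S δ) {n : ℕ}
    (A U H : Matrix (Fin n) (Fin n) S) (d : ℕ)
    (hdeg : ∀ i j, R.degD (A i j) ≤ (d : WithBot ℕ))
    (hU : IsUnit U) (hUA : U * A = H) (hH : R.HermiteForm H) :
    ∀ i j, R.degD (H i j) ≤ ((n * d : ℕ) : WithBot ℕ) := by
  obtain ⟨htri, hmonic, hlt⟩ := hH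
  have hdiag : ∀ i, H i i ≠ 0 := fun i => (hmonic i).ne_zero
  have hsum := R.sum_natDegD_diag_le hdeg hU hUA (fun i j h => htri i j h) hdiag
  have hbound : ∀ j, R.degD (H j j) ≤ ((n * d : ℕ) : WithBot ℕ) := fun j => by
    rw [R.degD_eq_natDegD (hdiag j)]
    exact_mod_cast (Finset.single_le_sum (f := fun j => R.natDegD (H j j)) (by simp)
      (Finset.mem_univ j)).trans hsum
  intro i j
  rcases lt_trichotomy i j with h | rfl | h
  · exact (hlt i j h).le.trans (hbound j)
  · exact hbound i
  · rw [htri i j h, R.degD_eq_bot_iff.2 rfl]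
    exact bot_le

/-- if `A` has full row rank and `deg_D A_{ij} ≤ d`, then its Hermite
form `H` satisfies `deg_D H_{ij} ≤ n·d`. -/
theorem degD_hermite_form_le
    {F : Type} [Field F] [CharZero F] {S : Type} [Ring S]
    (δ : RatFunc F → RatFunc F)
    (hδadd : ∀ a b : RatFunc F, δ (a + b) = δ a + δ b)
    (hδmul : ∀ a b : RatFunc F, δ (a * b) = a * δ b + δ a * b)
    (R : DiffPolyRing (RatFunc F) S δ) {n : ℕ}
    (A U H : Matrix (Fin n) (Fin n) S) (d : ℕ)
    (hA : DiffPolyRing.FullRowRank A)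
    (hdeg : ∀ i j, R.degD (A i j) ≤ (d : WithBot ℕ))
    (hU : IsUnit U) (hUA : U * A = H) (hH : R.HermiteForm H) :
    ∀ i j, R.degD (H i j) ≤ ((n * d : ℕ) : WithBot ℕ) :=
  degD_hermite_form_le_general δ R A U H d hdeg hU hUA hH
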